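/- For the strict distributive law λ† of the copresheaf 2-monad 𝔓† over the presheaf 2-monad 𝔓 given by λ†_X = ((y_X)_†)^!·y_{P†PX}:P†PX→PP†X, there is a 2-isomorphism (λ†,Q)-Alg ≅ Mon(Q-Dist): lax λ†-algebra structures p:P†X→PX on a Q-category X correspond bijectively to Q-distributors α:X⇸X with 1_X^* ≤ α and α∘α ≤ α (via p = α↓, α↓τ = τ↘α), and lax λ†-homomorphisms correspond exactly to the morphisms of Mon(Q-Dist). -/

import Mathlib

/-!
Common framework: quantaloids, `Q`-categories, `Q`-functors, `Q`-distributors,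
(co)presheaf constructions, 2-monads on `Q`-Cat, lax distributive laws over the
presheaf 2-monad, and lax extensions to `Q`-Dist.
-/

set_option autoImplicit false

universe u

namespace QT

/-- A (small) quantaloid: a category enriched in complete lattices, with
composition preserving suprema in each variable. -/
structure Quantaloid : Type (u + 1) where
  Obj : Type u
  Hom : Obj → Obj → Type u
  lat : ∀ a b, CompleteLattice (Hom a b)
  comp : ∀ {a b c}, Hom b c → Hom a b → Hom a c
  idm : ∀ a, Hom a a
  comp_assoc : ∀ {a b c d} (w : Hom c d) (v : Hom b c) (u : Hom a b),
    comp (comp w v) u = comp w (comp v u)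
  comp_idm : ∀ {a b} (u : Hom a b), comp u (idm a) = u
  idm_comp : ∀ {a b} (u : Hom a b), comp (idm b) u = u
  comp_sSup : ∀ {a b c} (v : Hom b c) (S : Set (Hom a b)),
    comp v (sSup S) = ⨆ u ∈ S, comp v u
  sSup_comp : ∀ {a b c} (S : Set (Hom b c)) (u : Hom a b),
    comp (sSup S) u = ⨆ v ∈ S, comp v u

attribute [instance] Quantaloid.lat

namespace Quantaloid

variable {Q : Quantaloid.{u}}

theorem comp_iSup {a b c : Q.Obj} (v : Q.Hom b c) {ι : Sort*} (f : ι → Q.Hom a b) :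
    Q.comp v (⨆ i, f i) = ⨆ i, Q.comp v (f i) := by
  rw [iSup, Q.comp_sSup, iSup_range]

theorem iSup_comp {a b c : Q.Obj} {ι : Sort*} (f : ι → Q.Hom b c) (u : Q.Hom a b) :
    Q.comp (⨆ i, f i) u = ⨆ i, Q.comp (f i) u := by
  rw [iSup, Q.sSup_comp, iSup_range]

theorem comp_le_comp {a b c : Q.Obj} {v v' : Q.Hom b c} {u u' : Q.Hom a b}
    (hv : v ≤ v') (hu : u ≤ u') : Q.comp v u ≤ Q.comp v' u' := by
  have h1 : Q.comp v' u ≤ Q.comp v' u' := by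
    have h := Q.comp_sSup v' {u, u'}
    rw [sSup_pair, sup_eq_right.mpr hu] at h
    rw [h]
    exact le_biSup (fun x => Q.comp v' x) (Set.mem_insert _ _)
  have h2 : Q.comp v u ≤ Q.comp v' u := by
    have h := Q.sSup_comp {v, v'} u
    rw [sSup_pair, sup_eq_right.mpr hv] at h
    rw [h]
    exact le_biSup (fun x => Q.comp x u) (Set.mem_insert _ _)
  exact le_trans h2 h1

/-- Internal hom `w ↙ u` (right adjoint to `- ∘ u`). -/
def lda {a b c : Q.Obj} (w : Q.Hom a c) (u : Q.Hom a b) : Q.Hom b c :=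
  sSup {v | Q.comp v u ≤ w}

/-- Internal hom `v ↘ w` (right adjoint to `v ∘ -`). -/
def rda {a b c : Q.Obj} (v : Q.Hom b c) (w : Q.Hom a c) : Q.Hom a b :=
  sSup {u | Q.comp v u ≤ w}

theorem le_lda {a b c : Q.Obj} {v : Q.Hom b c} {u : Q.Hom a b} {w : Q.Hom a c} :
    Q.comp v u ≤ w ↔ v ≤ lda w u := by
  constructor
  · exact fun h => le_sSup h
  · intro h
    calc Q.comp v u ≤ Q.comp (lda w u) u := comp_le_comp h le_rfl
      _ ≤ w := by
          rw [lda, Q.sSup_comp]; exact iSup₂_le fun v' hv' => hv'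

theorem le_rda {a b c : Q.Obj} {v : Q.Hom b c} {u : Q.Hom a b} {w : Q.Hom a c} :
    Q.comp v u ≤ w ↔ u ≤ rda v w := by
  constructor
  · exact fun h => le_sSup h
  · intro h
    calc Q.comp v u ≤ Q.comp v (rda v w) := comp_le_comp le_rfl h
      _ ≤ w := by
          rw [rda, Q.comp_sSup]; exact iSup₂_le fun u' hu' => hu'

end Quantaloid

variable {Q : Quantaloid.{u}}

/-- `Q`-relations between families of sets indexed by the objects of `Q`
(i.e. sets over `ob Q`, presented fibrewise). -/
abbrev QRel (Q : Quantaloid.{u}) (X Y : Q.Obj → Type u) : Type u :=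
  ∀ p q, X p → Y q → Q.Hom p q

/-- Composition of `Q`-relations. -/
def QRel.comp {X Y Z : Q.Obj → Type u} (ψ : QRel Q Y Z) (φ : QRel Q X Y) : QRel Q X Z :=
  fun p r x z => ⨆ q, ⨆ y : Y q, Q.comp (ψ q r y z) (φ p q x y)

theorem QRel.comp_mono {X Y Z : Q.Obj → Type u} {ψ ψ' : QRel Q Y Z} {φ φ' : QRel Q X Y}
    (h1 : ψ ≤ ψ') (h2 : φ ≤ φ') : QRel.comp ψ φ ≤ QRel.comp ψ' φ' := by
  intro p r x z
  exact iSup_mono fun q => iSup_mono fun y =>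
    Quantaloid.comp_le_comp (h1 q r y z) (h2 p q x y)

theorem QRel.comp_assoc {W X Y Z : Q.Obj → Type u}
    (χ : QRel Q Y Z) (ψ : QRel Q X Y) (φ : QRel Q W X) :
    QRel.comp (QRel.comp χ ψ) φ = QRel.comp χ (QRel.comp ψ φ) := by
  funext p s w z
  simp only [QRel.comp, Quantaloid.iSup_comp, Quantaloid.comp_iSup]
  apply le_antisymm
  · exact iSup₂_le fun q x => iSup₂_le fun r y =>
      le_iSup_of_le r (le_iSup_of_le y (le_iSup_of_le q (le_iSup_of_le x
        (Q.comp_assoc _ _ _).le)))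
  · exact iSup₂_le fun r y => iSup₂_le fun q x =>
      le_iSup_of_le q (le_iSup_of_le x (le_iSup_of_le r (le_iSup_of_le y
        (Q.comp_assoc _ _ _).ge)))

/-- A (small) `Q`-category. -/
structure QCat (Q : Quantaloid.{u}) : Type (u + 1) where
  el : Q.Obj → Type u
  hom : QRel Q el el
  refl : ∀ p (x : el p), Q.idm p ≤ hom p p x x
  trans : QRel.comp hom hom ≤ hom

/-- Pointwise transitivity in a `Q`-category. -/
theorem QCat.hom_comp_le (X : QCat Q) {p q r : Q.Obj}
    (x : X.el p) (y : X.el q) (z : X.el r) :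
    Q.comp (X.hom q r y z) (X.hom p q x y) ≤ X.hom p r x z :=
  le_trans
    (le_iSup_of_le q (le_iSup (fun y' : X.el q => Q.comp (X.hom q r y' z) (X.hom p q x y')) y))
    (X.trans p r x z)

/-- Any `Q`-relation into a `Q`-category embeds into its post-composite with the hom. -/
theorem QRel.le_hom_comp {W : Q.Obj → Type u} {Z : QCat Q} (ρ : QRel Q W Z.el) :
    ρ ≤ QRel.comp Z.hom ρ := by
  intro p q x z
  calc ρ p q x z = Q.comp (Q.idm q) (ρ p q x z) := (Q.idm_comp _).symm
    _ ≤ Q.comp (Z.hom q q z z) (ρ p q x z) := Quantaloid.comp_le_comp (Z.refl q z) le_rfl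
    _ ≤ _ := le_iSup_of_le q
        (le_iSup (fun z' : Z.el q => Q.comp (Z.hom q q z' z) (ρ p q x z')) z)

/-- Any `Q`-relation out of a `Q`-category embeds into its pre-composite with the hom. -/
theorem QRel.le_comp_hom {X : QCat Q} {W : Q.Obj → Type u} (ρ : QRel Q X.el W) :
    ρ ≤ QRel.comp ρ X.hom := by
  intro p q x z
  calc ρ p q x z = Q.comp (ρ p q x z) (Q.idm p) := (Q.comp_idm _).symm
    _ ≤ Q.comp (ρ p q x z) (X.hom p p x x) := Quantaloid.comp_le_comp le_rfl (X.refl p x)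
    _ ≤ _ := le_iSup_of_le p
        (le_iSup (fun x' : X.el p => Q.comp (ρ p q x' z) (X.hom p p x x')) x)

/-- A `Q`-functor. -/
structure QFun (X Y : QCat Q) : Type u where
  app : ∀ p, X.el p → Y.el p
  mono : ∀ p q (x : X.el p) (x' : X.el q),
    X.hom p q x x' ≤ Y.hom p q (app p x) (app q x')

def QFun.id (X : QCat Q) : QFun X X :=
  ⟨fun _ x => x, fun _ _ _ _ => le_rfl⟩

def QFun.comp {X Y Z : QCat Q} (g : QFun Y Z) (f : QFun X Y) : QFun X Z :=
  ⟨fun p x => g.app p (f.app p x),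
   fun p q x x' => le_trans (f.mono p q x x') (g.mono p q (f.app p x) (f.app q x'))⟩

/-- The (pointwise) order of `Q`-functors. -/
instance {X Y : QCat Q} : Preorder (QFun X Y) where
  le f g := ∀ p (x : X.el p), Q.idm p ≤ Y.hom p p (f.app p x) (g.app p x)
  le_refl f p x := Y.refl p (f.app p x)
  le_trans f g h h1 h2 := by
    intro p x
    calc Q.idm p = Q.comp (Q.idm p) (Q.idm p) := (Q.comp_idm _).symm
      _ ≤ Q.comp (Y.hom p p (g.app p x) (h.app p x)) (Y.hom p p (f.app p x) (g.app p x)) :=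
          Quantaloid.comp_le_comp (h2 p x) (h1 p x)
      _ ≤ Y.hom p p (f.app p x) (h.app p x) := Y.hom_comp_le _ _ _

/-- A `Q`-distributor between `Q`-categories. -/
structure QDist (X Y : QCat Q) : Type u where
  rel : QRel Q X.el Y.el
  compat : QRel.comp Y.hom (QRel.comp rel X.hom) ≤ rel

instance {X Y : QCat Q} : PartialOrder (QDist X Y) where
  le φ ψ := φ.rel ≤ ψ.rel
  le_refl φ := le_refl φ.rel
  le_trans _ _ _ h h' := by
    intro p q x y
    exact le_trans (h p q x y) (h' p q x y)
  le_antisymm φ ψ h h' := by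
    have hr : φ.rel = ψ.rel := le_antisymm h h'
    cases φ; cases ψ; cases hr; rfl

theorem QDist.hom_comp_le {X Y : QCat Q} (φ : QDist X Y) :
    QRel.comp Y.hom φ.rel ≤ φ.rel :=
  le_trans (QRel.comp_mono le_rfl (QRel.le_comp_hom φ.rel)) φ.compat

theorem QDist.comp_hom_le {X Y : QCat Q} (φ : QDist X Y) :
    QRel.comp φ.rel X.hom ≤ φ.rel :=
  le_trans (QRel.le_hom_comp _) φ.compat

theorem QDist.rel_comp_hom {X Y : QCat Q} (φ : QDist X Y) {p q r : Q.Obj}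
    (x : X.el p) (x' : X.el q) (y : Y.el r) :
    Q.comp (φ.rel q r x' y) (X.hom p q x x') ≤ φ.rel p r x y :=
  le_trans
    (le_iSup_of_le q (le_iSup (fun x'' : X.el q => Q.comp (φ.rel q r x'' y) (X.hom p q x x'')) x'))
    (φ.comp_hom_le p r x y)

theorem QDist.hom_comp_rel {X Y : QCat Q} (φ : QDist X Y) {p q r : Q.Obj}
    (x : X.el p) (y : Y.el q) (y' : Y.el r) :
    Q.comp (Y.hom q r y y') (φ.rel p q x y) ≤ φ.rel p r x y' :=
  le_trans
    (le_iSup_of_le q (le_iSup (fun y'' : Y.el q => Q.comp (Y.hom q r y'' y') (φ.rel p q x y'')) y))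
    (φ.hom_comp_le p r x y')

/-- Composition of `Q`-distributors. -/
def QDist.comp {X Y Z : QCat Q} (ψ : QDist Y Z) (φ : QDist X Y) : QDist X Z :=
  ⟨QRel.comp ψ.rel φ.rel, by
    calc QRel.comp Z.hom (QRel.comp (QRel.comp ψ.rel φ.rel) X.hom)
        = QRel.comp (QRel.comp Z.hom ψ.rel) (QRel.comp φ.rel X.hom) := by
          rw [QRel.comp_assoc, QRel.comp_assoc]
      _ ≤ QRel.comp ψ.rel φ.rel :=
          QRel.comp_mono ψ.hom_comp_le φ.comp_hom_le⟩

/-- The identity distributor `1_X^*` on a `Q`-category. -/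
def QCat.homDist (X : QCat Q) : QDist X X :=
  ⟨X.hom, le_trans (QRel.comp_mono le_rfl X.trans) X.trans⟩

/-- The graph `f_*` of a `Q`-functor. -/
def QFun.graph {X Y : QCat Q} (f : QFun X Y) : QDist X Y :=
  ⟨fun p q x y => Y.hom p q (f.app p x) y, by
    intro p q x y
    simp only [QRel.comp, Quantaloid.comp_iSup, Quantaloid.iSup_comp]
    refine iSup₂_le fun q' y' => iSup₂_le fun p' x' => ?_
    calc Q.comp (Y.hom q' q y' y) (Q.comp (Y.hom p' q' (f.app p' x') y') (X.hom p p' x x'))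
        ≤ Q.comp (Y.hom q' q y' y)
            (Q.comp (Y.hom p' q' (f.app p' x') y') (Y.hom p p' (f.app p x) (f.app p' x'))) :=
          Quantaloid.comp_le_comp le_rfl
            (Quantaloid.comp_le_comp le_rfl (f.mono p p' x x'))
      _ ≤ Q.comp (Y.hom q' q y' y) (Y.hom p q' (f.app p x) y') :=
          Quantaloid.comp_le_comp le_rfl (Y.hom_comp_le _ _ _)
      _ ≤ Y.hom p q (f.app p x) y := Y.hom_comp_le _ _ _⟩

/-- The cograph `f^*` of a `Q`-functor. -/
def QFun.cograph {X Y : QCat Q} (f : QFun X Y) : QDist Y X :=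
  ⟨fun p q y x => Y.hom p q y (f.app q x), by
    intro p q y x
    simp only [QRel.comp, Quantaloid.comp_iSup, Quantaloid.iSup_comp]
    refine iSup₂_le fun q' x' => iSup₂_le fun p' y' => ?_
    calc Q.comp (X.hom q' q x' x) (Q.comp (Y.hom p' q' y' (f.app q' x')) (Y.hom p p' y y'))
        ≤ Q.comp (Y.hom q' q (f.app q' x') (f.app q x))
            (Q.comp (Y.hom p' q' y' (f.app q' x')) (Y.hom p p' y y')) :=
          Quantaloid.comp_le_comp (f.mono q' q x' x) le_rfl
      _ ≤ Q.comp (Y.hom q' q (f.app q' x') (f.app q x)) (Y.hom p q' y (f.app q' x')) :=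
          Quantaloid.comp_le_comp le_rfl (Y.hom_comp_le _ _ _)
      _ ≤ Y.hom p q y (f.app q x) := Y.hom_comp_le _ _ _⟩

/-- The presheaf `Q`-category `P X`. -/
def QCat.P (X : QCat Q) : QCat Q where
  el s := { σ : ∀ p, X.el p → Q.Hom p s //
    ∀ p q (x : X.el p) (x' : X.el q), Q.comp (σ q x') (X.hom p q x x') ≤ σ p x }
  hom s s' σ σ' := ⨅ p, ⨅ x : X.el p, Quantaloid.lda (σ'.1 p x) (σ.1 p x)
  refl := by
    intro s σ
    refine le_iInf fun p => le_iInf fun x => Quantaloid.le_lda.mp ?_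
    rw [Q.idm_comp]
  trans := by
    intro s s'' σ σ''
    refine iSup₂_le fun s' σ' => ?_
    refine le_iInf fun p => le_iInf fun x => Quantaloid.le_lda.mp ?_
    rw [Q.comp_assoc]
    have h1 : Q.comp (⨅ p', ⨅ x' : X.el p', Quantaloid.lda (σ'.1 p' x') (σ.1 p' x'))
        (σ.1 p x) ≤ σ'.1 p x :=
      Quantaloid.le_lda.mpr (le_trans (iInf_le _ p) (iInf_le _ x))
    have h2 : Q.comp (⨅ p', ⨅ x' : X.el p', Quantaloid.lda (σ''.1 p' x') (σ'.1 p' x'))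
        (σ'.1 p x) ≤ σ''.1 p x :=
      Quantaloid.le_lda.mpr (le_trans (iInf_le _ p) (iInf_le _ x))
    exact le_trans (Quantaloid.comp_le_comp le_rfl h1) h2

/-- The copresheaf `Q`-category `P† X`. -/
def QCat.Pd (X : QCat Q) : QCat Q where
  el s := { τ : ∀ q, X.el q → Q.Hom s q //
    ∀ p q (x : X.el p) (x' : X.el q), Q.comp (X.hom p q x x') (τ p x) ≤ τ q x' }
  hom s s' τ τ' := ⨅ q, ⨅ x : X.el q, Quantaloid.rda (τ'.1 q x) (τ.1 q x)
  refl := by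
    intro s τ
    refine le_iInf fun q => le_iInf fun x => Quantaloid.le_rda.mp ?_
    rw [Q.comp_idm]
  trans := by
    intro s s'' τ τ''
    refine iSup₂_le fun s' τ' => ?_
    refine le_iInf fun q => le_iInf fun x => Quantaloid.le_rda.mp ?_
    rw [← Q.comp_assoc]
    have h1 : Q.comp (τ''.1 q x)
        (⨅ q', ⨅ x' : X.el q', Quantaloid.rda (τ''.1 q' x') (τ'.1 q' x')) ≤ τ'.1 q x :=
      Quantaloid.le_rda.mpr (le_trans (iInf_le _ q) (iInf_le _ x))
    have h2 : Q.comp (τ'.1 q x)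
        (⨅ q', ⨅ x' : X.el q', Quantaloid.rda (τ'.1 q' x') (τ.1 q' x')) ≤ τ.1 q x :=
      Quantaloid.le_rda.mpr (le_trans (iInf_le _ q) (iInf_le _ x))
    exact le_trans (Quantaloid.comp_le_comp h1 le_rfl) h2

/-- The Yoneda embedding `y_X : X → P X`. -/
def QCat.y (X : QCat Q) : QFun X X.P where
  app p x := ⟨fun q x' => X.hom q p x' x,
    fun p' q' x1 x2 => X.hom_comp_le x1 x2 x⟩
  mono := by
    intro p q x x'
    refine le_iInf fun r => le_iInf fun x'' => Quantaloid.le_lda.mp ?_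
    exact X.hom_comp_le x'' x x'

/-- The co-Yoneda embedding `y†_X : X → P† X`. -/
def QCat.yd (X : QCat Q) : QFun X X.Pd where
  app p x := ⟨fun q x' => X.hom p q x x',
    fun p' q' x1 x2 => X.hom_comp_le x x1 x2⟩
  mono := by
    intro p q x x'
    refine le_iInf fun r => le_iInf fun x'' => Quantaloid.le_rda.mp ?_
    exact X.hom_comp_le x x' x''

/-- `φ^→ : P Y → P X`, `τ ↦ τ ∘ φ`. -/
def QDist.fwd {X Y : QCat Q} (φ : QDist X Y) : QFun Y.P X.P where
  app s τ := ⟨fun p x => ⨆ q, ⨆ y : Y.el q, Q.comp (τ.1 q y) (φ.rel p q x y), by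
    intro p q x x'
    rw [Quantaloid.iSup_comp]
    refine iSup_le fun r => ?_
    rw [Quantaloid.iSup_comp]
    refine iSup_le fun y => ?_
    rw [Q.comp_assoc]
    exact le_iSup_of_le r (le_iSup_of_le y
      (Quantaloid.comp_le_comp le_rfl (φ.rel_comp_hom x x' y)))⟩
  mono := by
    intro s s' τ τ'
    refine le_iInf fun p => le_iInf fun x => Quantaloid.le_lda.mp ?_
    rw [Quantaloid.comp_iSup]
    refine iSup_le fun r => ?_
    rw [Quantaloid.comp_iSup]
    refine iSup_le fun y => ?_
    rw [← Q.comp_assoc]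
    have h : Q.comp (Y.P.hom s s' τ τ') (τ.1 r y) ≤ τ'.1 r y :=
      Quantaloid.le_lda.mpr (le_trans (iInf_le _ r) (iInf_le _ y))
    exact le_iSup_of_le r (le_iSup_of_le y (Quantaloid.comp_le_comp h le_rfl))

/-- `φ^↞ : P† X → P† Y`, `σ ↦ φ ∘ σ`. -/
def QDist.bwd {X Y : QCat Q} (φ : QDist X Y) : QFun X.Pd Y.Pd where
  app s σ := ⟨fun q y => ⨆ p, ⨆ x : X.el p, Q.comp (φ.rel p q x y) (σ.1 p x), by
    intro p q y y'
    rw [Quantaloid.comp_iSup]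
    refine iSup_le fun r => ?_
    rw [Quantaloid.comp_iSup]
    refine iSup_le fun x => ?_
    rw [← Q.comp_assoc]
    exact le_iSup_of_le r (le_iSup_of_le x
      (Quantaloid.comp_le_comp (φ.hom_comp_rel x y y') le_rfl))⟩
  mono := by
    intro s s' σ σ'
    refine le_iInf fun q => le_iInf fun y => Quantaloid.le_rda.mp ?_
    rw [Quantaloid.iSup_comp]
    refine iSup_le fun r => ?_
    rw [Quantaloid.iSup_comp]
    refine iSup_le fun x => ?_
    rw [Q.comp_assoc]
    have h : Q.comp (σ'.1 r x) (X.Pd.hom s s' σ σ') ≤ σ.1 r x :=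
      Quantaloid.le_rda.mpr (le_trans (iInf_le _ r) (iInf_le _ x))
    exact le_iSup_of_le r (le_iSup_of_le x (Quantaloid.comp_le_comp le_rfl h))

/-- `φ_→ : P X → P Y`, `σ ↦ σ ↙ φ`. -/
def QDist.fwdr {X Y : QCat Q} (φ : QDist X Y) : QFun X.P Y.P where
  app s σ := ⟨fun q y => ⨅ p, ⨅ x : X.el p, Quantaloid.lda (σ.1 p x) (φ.rel p q x y), by
    intro q q' y y'
    refine le_iInf fun p => le_iInf fun x => Quantaloid.le_lda.mp ?_
    rw [Q.comp_assoc]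
    have h1 : Q.comp (Y.hom q q' y y') (φ.rel p q x y) ≤ φ.rel p q' x y' :=
      φ.hom_comp_rel x y y'
    have h2 : Q.comp ((⨅ p', ⨅ x' : X.el p',
        Quantaloid.lda (σ.1 p' x') (φ.rel p' q' x' y')) : Q.Hom q' s) (φ.rel p q' x y')
        ≤ σ.1 p x :=
      Quantaloid.le_lda.mpr (le_trans (iInf_le _ p) (iInf_le _ x))
    exact le_trans (Quantaloid.comp_le_comp le_rfl h1) h2⟩
  mono := by
    intro s s' σ σ'
    refine le_iInf fun q => le_iInf fun y => Quantaloid.le_lda.mp ?_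
    refine le_iInf fun p => le_iInf fun x => Quantaloid.le_lda.mp ?_
    rw [Q.comp_assoc]
    have h1 : Q.comp ((⨅ p', ⨅ x' : X.el p',
        Quantaloid.lda (σ.1 p' x') (φ.rel p' q x' y)) : Q.Hom q s) (φ.rel p q x y)
        ≤ σ.1 p x :=
      Quantaloid.le_lda.mpr (le_trans (iInf_le _ p) (iInf_le _ x))
    have h2 : Q.comp (X.P.hom s s' σ σ') (σ.1 p x) ≤ σ'.1 p x :=
      Quantaloid.le_lda.mpr (le_trans (iInf_le _ p) (iInf_le _ x))
    exact le_trans (Quantaloid.comp_le_comp le_rfl h1) h2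

/-- Isbell `φ↑ : P X → P† Y`, `σ ↦ φ ↙ σ`. -/
def QDist.up {X Y : QCat Q} (φ : QDist X Y) : QFun X.P Y.Pd where
  app s σ := ⟨fun q y => ⨅ p, ⨅ x : X.el p, Quantaloid.lda (φ.rel p q x y) (σ.1 p x), by
    intro q q' y y'
    refine le_iInf fun p => le_iInf fun x => Quantaloid.le_lda.mp ?_
    rw [Q.comp_assoc]
    have h1 : Q.comp ((⨅ p', ⨅ x' : X.el p',
        Quantaloid.lda (φ.rel p' q x' y) (σ.1 p' x')) : Q.Hom s q) (σ.1 p x)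
        ≤ φ.rel p q x y :=
      Quantaloid.le_lda.mpr (le_trans (iInf_le _ p) (iInf_le _ x))
    exact le_trans (Quantaloid.comp_le_comp le_rfl h1) (φ.hom_comp_rel x y y')⟩
  mono := by
    intro s s' σ σ'
    refine le_iInf fun q => le_iInf fun y => Quantaloid.le_rda.mp ?_
    refine le_iInf fun p => le_iInf fun x => Quantaloid.le_lda.mp ?_
    rw [Q.comp_assoc]
    have h1 : Q.comp (X.P.hom s s' σ σ') (σ.1 p x) ≤ σ'.1 p x :=
      Quantaloid.le_lda.mpr (le_trans (iInf_le _ p) (iInf_le _ x))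
    have h2 : Q.comp ((⨅ p', ⨅ x' : X.el p',
        Quantaloid.lda (φ.rel p' q x' y) (σ'.1 p' x')) : Q.Hom s' q) (σ'.1 p x)
        ≤ φ.rel p q x y :=
      Quantaloid.le_lda.mpr (le_trans (iInf_le _ p) (iInf_le _ x))
    exact le_trans (Quantaloid.comp_le_comp le_rfl h1) h2

/-- Isbell `φ↓ : P† Y → P X`, `τ ↦ τ ↘ φ`. -/
def QDist.down {X Y : QCat Q} (φ : QDist X Y) : QFun Y.Pd X.P where
  app s τ := ⟨fun p x => ⨅ q, ⨅ y : Y.el q, Quantaloid.rda (τ.1 q y) (φ.rel p q x y), by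
    intro p p' x x'
    refine le_iInf fun q => le_iInf fun y => Quantaloid.le_rda.mp ?_
    rw [← Q.comp_assoc]
    have h1 : Q.comp (τ.1 q y) ((⨅ q', ⨅ y' : Y.el q',
        Quantaloid.rda (τ.1 q' y') (φ.rel p' q' x' y')) : Q.Hom p' s)
        ≤ φ.rel p' q x' y :=
      Quantaloid.le_rda.mpr (le_trans (iInf_le _ q) (iInf_le _ y))
    exact le_trans (Quantaloid.comp_le_comp h1 le_rfl) (φ.rel_comp_hom x x' y)⟩
  mono := by
    intro s s' τ τ'
    refine le_iInf fun p => le_iInf fun x => Quantaloid.le_lda.mp ?_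
    refine le_iInf fun q => le_iInf fun y => Quantaloid.le_rda.mp ?_
    rw [← Q.comp_assoc]
    have h1 : Q.comp (τ'.1 q y) (Y.Pd.hom s s' τ τ') ≤ τ.1 q y :=
      Quantaloid.le_rda.mpr (le_trans (iInf_le _ q) (iInf_le _ y))
    have h2 : Q.comp (τ.1 q y) ((⨅ q', ⨅ y' : Y.el q',
        Quantaloid.rda (τ.1 q' y') (φ.rel p q' x y')) : Q.Hom p s)
        ≤ φ.rel p q x y :=
      Quantaloid.le_rda.mpr (le_trans (iInf_le _ q) (iInf_le _ y))
    exact le_trans (Quantaloid.comp_le_comp h1 le_rfl) h2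

/-- The transpose `←φ : Y → P X` of a distributor `φ : X ⇸ Y`. -/
def QDist.transpose {X Y : QCat Q} (φ : QDist X Y) : QFun Y X.P where
  app q y := ⟨fun p x => φ.rel p q x y,
    fun p q' x x' => φ.rel_comp_hom x x' y⟩
  mono := by
    intro q q' y y'
    refine le_iInf fun p => le_iInf fun x => Quantaloid.le_lda.mp ?_
    exact φ.hom_comp_rel x y y'

/-- The inverse of transposition. -/
def QFun.untranspose {X Y : QCat Q} (g : QFun Y X.P) : QDist X Y :=
  ⟨fun p q x y => (g.app q y).1 p x, by
    intro p q x y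
    simp only [QRel.comp, Quantaloid.comp_iSup, Quantaloid.iSup_comp]
    refine iSup₂_le fun q' y' => iSup₂_le fun p' x' => ?_
    have h1 : Q.comp ((g.app q' y').1 p' x') (X.hom p p' x x') ≤ (g.app q' y').1 p x :=
      (g.app q' y').2 p p' x x'
    have h2 : Q.comp (Y.hom q' q y' y) ((g.app q' y').1 p x) ≤ (g.app q y).1 p x :=
      Quantaloid.le_lda.mpr
        (le_trans (g.mono q' q y' y) (le_trans (iInf_le _ p) (iInf_le _ x)))
    exact le_trans (Quantaloid.comp_le_comp le_rfl h1) h2⟩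

/-- `f_! := (f^*)^→ : P X → P Y`. -/
def pshf {X Y : QCat Q} (f : QFun X Y) : QFun X.P Y.P := f.cograph.fwd

/-- `f^! := (f_*)^→ : P Y → P X`. -/
def pshb {X Y : QCat Q} (f : QFun X Y) : QFun Y.P X.P := f.graph.fwd

/-- `f_† := (f_*)^↞ : P† X → P† Y`. -/
def cpsf {X Y : QCat Q} (f : QFun X Y) : QFun X.Pd Y.Pd := f.graph.bwd

/-- `f^† := (f^*)^↞ : P† Y → P† X`. -/
def cpsb {X Y : QCat Q} (f : QFun X Y) : QFun Y.Pd X.Pd := f.cograph.bwd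

/-- `sup_{P X} = y_X^! : P P X → P X`: the multiplication of the presheaf 2-monad. -/
def supP (X : QCat Q) : QFun X.P.P X.P := pshb X.y

/-- `inf_{P† X} = (y†_X)^† : P† P† X → P† X`: the multiplication of the copresheaf
2-monad. -/
def infPd (X : QCat Q) : QFun X.Pd.Pd X.Pd := cpsb X.yd

/-- Adjunction `f ⊣ g` in `Q`-Cat. -/
def QAdj {X Y : QCat Q} (f : QFun X Y) (g : QFun Y X) : Prop :=
  QFun.id X ≤ g.comp f ∧ f.comp g ≤ QFun.id Y

/-- Fully faithful `Q`-functors. -/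
def QFun.FullyFaithful {X Y : QCat Q} (f : QFun X Y) : Prop :=
  ∀ p q (x : X.el p) (x' : X.el q), X.hom p q x x' = Y.hom p q (f.app p x) (f.app q x')

/-- A `Q`-closure operation on a `Q`-category. -/
def IsClosureOp (Z : QCat Q) (c : QFun Z Z) : Prop :=
  QFun.id Z ≤ c ∧ c.comp c = c

/-- A 2-functor on `Q`-Cat. -/
structure TwoFunctor (Q : Quantaloid.{u}) : Type (u + 1) where
  obj : QCat Q → QCat Q
  map : ∀ {X Y : QCat Q}, QFun X Y → QFun (obj X) (obj Y)
  map_id : ∀ X : QCat Q, map (QFun.id X) = QFun.id (obj X)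
  map_comp : ∀ {X Y Z : QCat Q} (g : QFun Y Z) (f : QFun X Y),
    map (g.comp f) = (map g).comp (map f)
  map_mono : ∀ {X Y : QCat Q} {f g : QFun X Y}, f ≤ g → map f ≤ map g

/-- A 2-monad on `Q`-Cat. -/
structure TwoMonad (Q : Quantaloid.{u}) extends TwoFunctor Q where
  unit : ∀ X : QCat Q, QFun X (obj X)
  mult : ∀ X : QCat Q, QFun (obj (obj X)) (obj X)
  unit_nat : ∀ {X Y : QCat Q} (f : QFun X Y), (unit Y).comp f = (map f).comp (unit X)
  mult_nat : ∀ {X Y : QCat Q} (f : QFun X Y),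
    (mult Y).comp (map (map f)) = (map f).comp (mult X)
  mult_unit : ∀ X : QCat Q, (mult X).comp (unit (obj X)) = QFun.id (obj X)
  mult_map_unit : ∀ X : QCat Q, (mult X).comp (map (unit X)) = QFun.id (obj X)
  mult_assoc : ∀ X : QCat Q, (mult X).comp (map (mult X)) = (mult X).comp (mult (obj X))

/-- The type of families `λ_X : T P X → P T X`. -/
abbrev LamFamily (T : TwoFunctor Q) : Type (u + 1) :=
  ∀ X : QCat Q, QFun (T.obj X.P) ((T.obj X).P)

/-- Lax naturality law (a): `(Tf)_! ∘ λ_X ≤ λ_Y ∘ T(f_!)`. -/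
def LawA (T : TwoFunctor Q) (lam : LamFamily T) : Prop :=
  ∀ (X Y : QCat Q) (f : QFun X Y),
    (pshf (T.map f)).comp (lam X) ≤ (lam Y).comp (T.map (pshf f))

/-- Lax `P`-unit law (b): `y_{TX} ≤ λ_X ∘ T y_X`. -/
def LawB (T : TwoFunctor Q) (lam : LamFamily T) : Prop :=
  ∀ X : QCat Q, QCat.y (T.obj X) ≤ (lam X).comp (T.map X.y)

/-- The `P`-unit law (b) holding strictly (flatness). -/
def LawBstrict (T : TwoFunctor Q) (lam : LamFamily T) : Prop :=
  ∀ X : QCat Q, (lam X).comp (T.map X.y) = QCat.y (T.obj X)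

/-- Lax `P`-multiplication law (c): `s_{TX} ∘ (λ_X)_! ∘ λ_{PX} ≤ λ_X ∘ T s_X`. -/
def LawC (T : TwoFunctor Q) (lam : LamFamily T) : Prop :=
  ∀ X : QCat Q,
    (supP (T.obj X)).comp ((pshf (lam X)).comp (lam X.P)) ≤ (lam X).comp (T.map (supP X))

/-- Lax `T`-unit law (d): `(e_X)_! ≤ λ_X ∘ e_{PX}`. -/
def LawD (M : TwoMonad Q) (lam : LamFamily M.toTwoFunctor) : Prop :=
  ∀ X : QCat Q, pshf (M.unit X) ≤ (lam X).comp (M.unit X.P)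

/-- Lax `T`-multiplication law (e): `(m_X)_! ∘ λ_{TX} ∘ T λ_X ≤ λ_X ∘ m_{PX}`. -/
def LawE (M : TwoMonad Q) (lam : LamFamily M.toTwoFunctor) : Prop :=
  ∀ X : QCat Q,
    (pshf (M.mult X)).comp ((lam (M.obj X)).comp (M.map (lam X))) ≤ (lam X).comp (M.mult X.P)

def IsDistLawABC (T : TwoFunctor Q) (lam : LamFamily T) : Prop :=
  LawA T lam ∧ LawB T lam ∧ LawC T lam

/-- A (lax) distributive law of the 2-monad `M` over the presheaf 2-monad. -/
def IsDistLaw (M : TwoMonad Q) (lam : LamFamily M.toTwoFunctor) : Prop :=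
  IsDistLawABC M.toTwoFunctor lam ∧ LawD M lam ∧ LawE M lam

/-- A flat distributive law: (b) holds strictly. -/
def IsFlatDistLaw (M : TwoMonad Q) (lam : LamFamily M.toTwoFunctor) : Prop :=
  IsDistLaw M lam ∧ LawBstrict M.toTwoFunctor lam

/-- Lax `λ`-algebra: laws (f) and (g). -/
def IsLaxAlg (M : TwoMonad Q) (lam : LamFamily M.toTwoFunctor) (X : QCat Q)
    (p : QFun (M.obj X) X.P) : Prop :=
  X.y ≤ p.comp (M.unit X) ∧
  (supP X).comp ((pshf p).comp ((lam X).comp (M.map p))) ≤ p.comp (M.mult X)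

/-- Lax `λ`-homomorphism: law (h). -/
def IsLaxHom (M : TwoMonad Q) {X Y : QCat Q}
    (p : QFun (M.obj X) X.P) (q : QFun (M.obj Y) Y.P) (f : QFun X Y) : Prop :=
  (pshf f).comp p ≤ q.comp (M.map f)

/-- The type of families `T̂φ : TX ⇸ TY`, one for each `φ : X ⇸ Y`. -/
abbrev ExtFamily (T : TwoFunctor Q) : Type (u + 1) :=
  ∀ ⦃X Y : QCat Q⦄, QDist X Y → QDist (T.obj X) (T.obj Y)

/-- A lax extension of the 2-functor `T` to `Q`-Dist: conditions (1), (2), (3). -/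
def IsLaxExt (T : TwoFunctor Q) (ext : ExtFamily T) : Prop :=
  (∀ (X Y : QCat Q) (φ φ' : QDist X Y), φ ≤ φ' → ext φ ≤ ext φ') ∧
  (∀ (X Y Z : QCat Q) (φ : QDist X Y) (ψ : QDist Y Z), (ext ψ).comp (ext φ) ≤ ext (ψ.comp φ)) ∧
  (∀ (X Y : QCat Q) (f : QFun X Y),
    (T.map f).graph ≤ ext f.graph ∧ (T.map f).cograph ≤ ext f.cograph)

/-- Condition (4): `φ ∘ e_X^* ≤ e_Y^* ∘ T̂φ`. -/
def ExtLaw4 (M : TwoMonad Q) (ext : ExtFamily M.toTwoFunctor) : Prop :=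
  ∀ (X Y : QCat Q) (φ : QDist X Y),
    φ.comp (M.unit X).cograph ≤ ((M.unit Y).cograph).comp (ext φ)

/-- Condition (5): `T̂T̂φ ∘ m_X^* ≤ m_Y^* ∘ T̂φ`. -/
def ExtLaw5 (M : TwoMonad Q) (ext : ExtFamily M.toTwoFunctor) : Prop :=
  ∀ (X Y : QCat Q) (φ : QDist X Y),
    (ext (ext φ)).comp (M.mult X).cograph ≤ ((M.mult Y).cograph).comp (ext φ)

/-- A lax extension of the 2-monad `M` to `Q`-Dist. -/
def IsMonadLaxExt (M : TwoMonad Q) (ext : ExtFamily M.toTwoFunctor) : Prop :=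
  IsLaxExt M.toTwoFunctor ext ∧ ExtLaw4 M ext ∧ ExtLaw5 M ext

/-- Flatness of a lax extension: `T̂ 1_X^* = 1_{TX}^*`. -/
def FlatExt (T : TwoFunctor Q) (ext : ExtFamily T) : Prop :=
  ∀ X : QCat Q, ext X.homDist = (T.obj X).homDist

/-- From a lax distributive law to a lax extension: `←(T̂φ) = λ_X ∘ T(←φ)`. -/
def PhiExt (T : TwoFunctor Q) (lam : LamFamily T) : ExtFamily T :=
  fun X Y φ => QFun.untranspose ((lam X).comp (T.map φ.transpose))

/-- From a lax extension to a lax distributive law: `λ_X = ←(T̂((y_X)_*))`. -/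
def PsiLam (T : TwoFunctor Q) (ext : ExtFamily T) : LamFamily T :=
  fun X => (ext X.y.graph).transpose

/-- The canonical lax extension `T̂φ = (T ←φ)^* ∘ (T y_X)_*`. -/
def hatExt (T : TwoFunctor Q) : ExtFamily T :=
  fun X Y φ => ((T.map φ.transpose).cograph).comp (T.map X.y).graph

/-- `λ_X = y_{PX} ∘ sup_{PX}`: the flat distributive law of `P` over itself. -/
def lamP (X : QCat Q) : QFun X.P.P X.P.P := (QCat.y X.P).comp (supP X)

/-- `λ†_X = ((y_X)_†)^! ∘ y_{P†PX}`: the strict distributive law of `P†` over `P`. -/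
def lamd (X : QCat Q) : QFun X.P.Pd X.Pd.P := (pshb (cpsf X.y)).comp (QCat.y X.P.Pd)

/-- `Λ_X = y_{PP†X} ∘ ((y_X)_†)^!`: the flat distributive law of `P P†` over `P`. -/
def LamPPd (X : QCat Q) : QFun X.P.Pd.P X.Pd.P.P := (QCat.y X.Pd.P).comp (pshb (cpsf X.y))

/-- The multiplication `S_X = s_{P†X} ∘ (y†_{PP†X})^!` of the double presheaf 2-monad. -/
def Smult (X : QCat Q) : QFun X.Pd.P.Pd.P X.Pd.P := (supP X.Pd).comp (pshb (QCat.yd X.Pd.P))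

/-- `Λ†_X = (y_X^!)^{†!} ∘ y_{P†PPX}`: the flat distributive law of `P† P` over `P`. -/
def LamPdP (X : QCat Q) : QFun X.P.P.Pd X.P.Pd.P :=
  (pshf (cpsf (supP X))).comp (QCat.y X.P.P.Pd)

/-- The multiplication `S†_X = s†_{PX} ∘ (y_{P†PX})^†` of the double copresheaf
2-monad. -/
def Sdmult (X : QCat Q) : QFun X.P.Pd.P.Pd X.P.Pd := (infPd X.P).comp (cpsb (QCat.y X.P.Pd))

/-- Pointwise infimum of a family of `Q`-functors into a presheaf `Q`-category. -/
def QFun.iInfP {ι : Type u} {Z X : QCat Q} (F : ι → QFun Z X.P) : QFun Z X.P where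
  app s z := ⟨fun p x => ⨅ i, ((F i).app s z).1 p x, by
    intro p q x x'
    refine le_iInf fun i => ?_
    exact le_trans
      (Quantaloid.comp_le_comp (iInf_le (fun i => ((F i).app s z).1 q x') i) le_rfl)
      (((F i).app s z).2 p q x x')⟩
  mono := by
    intro s s' z z'
    refine le_iInf fun p => le_iInf fun x => Quantaloid.le_lda.mp ?_
    refine le_iInf fun i => ?_
    have h1 : Q.comp (Z.hom s s' z z') (⨅ j, ((F j).app s z).1 p x)
        ≤ Q.comp (Z.hom s s' z z') (((F i).app s z).1 p x) :=
      Quantaloid.comp_le_comp le_rfl (iInf_le _ i)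
    have h2 : Q.comp (Z.hom s s' z z') (((F i).app s z).1 p x)
        ≤ ((F i).app s' z').1 p x :=
      Quantaloid.le_lda.mpr
        (le_trans ((F i).mono s s' z z') (le_trans (iInf_le _ p) (iInf_le _ x)))
    exact le_trans h1 h2

/-!
A lax `λ†`-algebra structure `p : P†X → PX` is determined by its restriction
`α(x, x') = p(y† x')(x)` along the co-Yoneda embedding. Law (g), evaluated at the
copresheaf `(y†)_† τ`, whose infimum is `τ`, gives `(α↓τ)(y) ∘ α(x, y) ≤ (pτ)(x)`;
together with `p ≤ α↓`, which holds for every `Q`-functor `p`, and reflexivity of `α`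
(law (f)) this yields `α↓ = p`, and at `τ = y† z` it is transitivity of `α`. Conversely,
for a monad `α` the Yoneda lemma reduces law (g) for `α↓` to
`τ'(z) ∘ (α↓τ')(y) ∘ τ(y) ∘ (α↓τ)(x) ≤ α(y, z) ∘ α(x, y) ≤ α(x, z)`.
Lax homomorphisms are compared by evaluating at representable copresheaves.
-/

namespace Quantaloid

theorem le_comp_of_idm_le_right {a b : Q.Obj} (u : Q.Hom a b) {v : Q.Hom a a}
    (h : Q.idm a ≤ v) : u ≤ Q.comp u v :=
  calc u = Q.comp u (Q.idm a) := (Q.comp_idm u).symm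
    _ ≤ Q.comp u v := comp_le_comp le_rfl h

theorem le_comp_of_idm_le_left {a b : Q.Obj} (u : Q.Hom a b) {v : Q.Hom b b}
    (h : Q.idm b ≤ v) : u ≤ Q.comp v u :=
  calc u = Q.comp (Q.idm b) u := (Q.idm_comp u).symm
    _ ≤ Q.comp v u := comp_le_comp h le_rfl

theorem lda_le_of_idm_le {a c : Q.Obj} (w : Q.Hom a c) {u : Q.Hom a a} (h : Q.idm a ≤ u) :
    lda w u ≤ w :=
  (le_comp_of_idm_le_right _ h).trans (le_lda.mpr le_rfl)

theorem rda_le_of_idm_le {a b : Q.Obj} {v : Q.Hom b b} (w : Q.Hom a b) (h : Q.idm b ≤ v) :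
    rda v w ≤ w :=
  (le_comp_of_idm_le_left _ h).trans (le_rda.mpr le_rfl)

theorem idm_le_lda_iff {a s : Q.Obj} {w u : Q.Hom a s} : Q.idm s ≤ lda w u ↔ u ≤ w := by
  rw [← le_lda, Q.idm_comp]

end Quantaloid

open Quantaloid

theorem QFun.ext {X Y : QCat Q} {f g : QFun X Y} (h : f.app = g.app) : f = g := by
  cases f; cases g; cases h; rfl

theorem QFun.comp_app {X Y Z : QCat Q} (g : QFun Y Z) (f : QFun X Y) {a : Q.Obj} (x : X.el a) :
    (g.comp f).app a x = g.app a (f.app a x) :=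
  rfl

theorem QCat.P_hom_comp_app_le {X : QCat Q} {s t : Q.Obj} (σ : X.P.el s) (σ' : X.P.el t)
    {a : Q.Obj} (x : X.el a) : Q.comp (X.P.hom s t σ σ') (σ.1 a x) ≤ σ'.1 a x :=
  le_lda.mpr ((iInf_le _ a).trans (iInf_le _ x))

theorem QCat.app_comp_Pd_hom_le {X : QCat Q} {s t : Q.Obj} (τ : X.Pd.el s) (τ' : X.Pd.el t)
    {b : Q.Obj} (x : X.el b) : Q.comp (τ'.1 b x) (X.Pd.hom s t τ τ') ≤ τ.1 b x :=
  le_rda.mpr ((iInf_le _ b).trans (iInf_le _ x))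

theorem QFun.le_iff_app_le {Z X : QCat Q} {f g : QFun Z X.P} :
    f ≤ g ↔ ∀ s (z : Z.el s) a (x : X.el a), (f.app s z).1 a x ≤ (g.app s z).1 a x := by
  constructor
  · intro h s z a x
    exact idm_le_lda_iff.mp ((h s z).trans ((iInf_le _ a).trans (iInf_le _ x)))
  · intro h s z
    exact le_iInf fun a => le_iInf fun x => idm_le_lda_iff.mpr (h s z a x)

theorem QFun.eq_of_le_of_ge {Z X : QCat Q} {f g : QFun Z X.P} (h : f ≤ g) (h' : g ≤ f) :
    f = g := by
  rw [QFun.le_iff_app_le] at h h'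
  exact QFun.ext (funext fun s => funext fun z => Subtype.ext
    (funext fun a => funext fun x => le_antisymm (h s z a x) (h' s z a x)))

theorem QCat.P_hom_y (X : QCat Q) {a t : Q.Obj} (x : X.el a) (σ : X.P.el t) :
    X.P.hom a t (X.y.app a x) σ = σ.1 a x :=
  le_antisymm ((iInf_le _ a).trans ((iInf_le _ x).trans (lda_le_of_idm_le _ (X.refl a x))))
    (le_iInf fun c => le_iInf fun z => le_lda.mp (σ.2 c a z x))

theorem QCat.Pd_hom_yd (X : QCat Q) {s b : Q.Obj} (τ : X.Pd.el s) (x : X.el b) :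
    X.Pd.hom s b τ (X.yd.app b x) = τ.1 b x :=
  le_antisymm ((iInf_le _ b).trans ((iInf_le _ x).trans (rda_le_of_idm_le _ (X.refl b x))))
    (le_iInf fun c => le_iInf fun z => le_rda.mp (τ.2 b c x z))

theorem pshb_app {Y Z : QCat Q} (g : QFun Y Z) {s b : Q.Obj} (σ : Z.P.el s) (w : Y.el b) :
    ((pshb g).app s σ).1 b w = σ.1 b (g.app b w) :=
  le_antisymm (iSup₂_le fun q z => σ.2 b q (g.app b w) z)
    (le_iSup₂_of_le b (g.app b w) (le_comp_of_idm_le_right _ (Z.refl b _)))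

theorem pshf_app {Y Z : QCat Q} (g : QFun Y Z) {s a : Q.Obj} (σ : Y.P.el s) (z : Z.el a) :
    ((pshf g).app s σ).1 a z
      = ⨆ q, ⨆ w : Y.el q, Q.comp (σ.1 q w) (Z.hom a q z (g.app q w)) :=
  rfl

theorem cpsf_app {Y Z : QCat Q} (g : QFun Y Z) {s b : Q.Obj} (τ : Y.Pd.el s) (z : Z.el b) :
    ((cpsf g).app s τ).1 b z
      = ⨆ q, ⨆ w : Y.el q, Q.comp (Z.hom q b (g.app q w) z) (τ.1 q w) :=
  rfl

theorem app_le_cpsf_app {Y Z : QCat Q} (g : QFun Y Z) {s b : Q.Obj} (τ : Y.Pd.el s)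
    (w : Y.el b) : τ.1 b w ≤ ((cpsf g).app s τ).1 b (g.app b w) :=
  le_iSup₂_of_le b w (le_comp_of_idm_le_left _ (Z.refl b _))

theorem cpsf_y_app (X : QCat Q) {b t : Q.Obj} (τ : X.Pd.el b) (σ : X.P.el t) :
    ((cpsf X.y).app b τ).1 t σ = ⨆ c, ⨆ z : X.el c, Q.comp (σ.1 c z) (τ.1 c z) := by
  simp only [cpsf_app, QCat.P_hom_y]

theorem infPd_app (X : QCat Q) {s b : Q.Obj} (T : X.Pd.Pd.el s) (z : X.el b) :
    ((infPd X).app s T).1 b z = ⨆ t, ⨆ τ : X.Pd.el t, Q.comp (τ.1 b z) (T.1 t τ) := by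
  simp only [infPd, cpsb, QDist.bwd, QFun.cograph, QCat.Pd_hom_yd]

theorem supP_pshf_app {Y X : QCat Q} (p : QFun Y X.P) {s a : Q.Obj} (Φ : Y.P.el s)
    (x : X.el a) :
    ((supP X).app s ((pshf p).app s Φ)).1 a x
      = ⨆ b, ⨆ τ : Y.el b, Q.comp (Φ.1 b τ) ((p.app b τ).1 a x) := by
  simp only [supP, pshb_app, pshf_app, QCat.P_hom_y]

theorem lamd_app (X : QCat Q) {s b : Q.Obj} (Θ : X.P.Pd.el s) (τ : X.Pd.el b) :
    ((lamd X).app s Θ).1 b τ = X.P.Pd.hom b s ((cpsf X.y).app b τ) Θ :=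
  pshb_app (cpsf X.y) (X.P.Pd.y.app s Θ) τ

theorem infPd_cpsf_yd (X : QCat Q) {s : Q.Obj} (τ : X.Pd.el s) :
    (infPd X).app s ((cpsf X.yd).app s τ) = τ := by
  refine Subtype.ext (funext fun b => funext fun z => le_antisymm ?_ ?_)
  · rw [infPd_app]
    refine iSup₂_le fun t τ' => ?_
    simp only [cpsf_app, Quantaloid.comp_iSup]
    refine iSup₂_le fun c w => ?_
    rw [← Q.comp_assoc]
    calc Q.comp (Q.comp (τ'.1 b z) (X.Pd.hom c t (X.yd.app c w) τ')) (τ.1 c w)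
        ≤ Q.comp (X.hom c b w z) (τ.1 c w) :=
          comp_le_comp (QCat.app_comp_Pd_hom_le _ _ z) le_rfl
      _ ≤ τ.1 b z := τ.2 c b w z
  · rw [infPd_app]
    exact le_iSup₂_of_le b (X.yd.app b z)
      ((app_le_cpsf_app X.yd τ z).trans (le_comp_of_idm_le_left _ (X.refl b z)))

namespace QDist

variable {X Y : QCat Q}

theorem le_down_app_iff (φ : QDist X Y) {s a : Q.Obj} (τ : Y.Pd.el s) (x : X.el a)
    (u : Q.Hom a s) :
    u ≤ (φ.down.app s τ).1 a x ↔ ∀ b (y : Y.el b), Q.comp (τ.1 b y) u ≤ φ.rel a b x y :=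
  ⟨fun h b y => le_rda.mpr (h.trans ((iInf_le _ b).trans (iInf_le _ y))),
    fun h => le_iInf fun b => le_iInf fun y => le_rda.mp (h b y)⟩

theorem app_comp_down_app_le (φ : QDist X Y) {s a b : Q.Obj} (τ : Y.Pd.el s) (x : X.el a)
    (y : Y.el b) : Q.comp (τ.1 b y) ((φ.down.app s τ).1 a x) ≤ φ.rel a b x y :=
  (φ.le_down_app_iff τ x _).mp le_rfl b y

theorem down_app_le_of_idm_le (φ : QDist X Y) {a b : Q.Obj} {τ : Y.Pd.el b} (x : X.el a)
    {y : Y.el b} (h : Q.idm b ≤ τ.1 b y) : (φ.down.app b τ).1 a x ≤ φ.rel a b x y :=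
  (le_comp_of_idm_le_left _ h).trans (φ.app_comp_down_app_le τ x y)

theorem down_app_yd (φ : QDist X Y) {a b : Q.Obj} (x : X.el a) (y : Y.el b) :
    (φ.down.app b (Y.yd.app b y)).1 a x = φ.rel a b x y :=
  le_antisymm (φ.down_app_le_of_idm_le x (Y.refl b y))
    ((φ.le_down_app_iff _ x _).mpr fun _ y' => φ.hom_comp_rel x y y')

theorem untranspose_down_comp_yd (φ : QDist X Y) : (φ.down.comp Y.yd).untranspose = φ :=
  le_antisymm (fun _ _ x y => (φ.down_app_yd x y).le) (fun _ _ x y => (φ.down_app_yd x y).ge)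

theorem down_injective : Function.Injective (QDist.down : QDist X Y → QFun Y.Pd X.P) :=
  fun φ ψ h => by rw [← φ.untranspose_down_comp_yd, h, ψ.untranspose_down_comp_yd]

theorem pshf_comp_down_le_iff {X' Y' : QCat Q} (f : QFun X Y) (f' : QFun X' Y')
    (α : QDist X X') (β : QDist Y Y') :
    (pshf f).comp α.down ≤ β.down.comp (cpsf f') ↔
      ∀ a b (x : X.el a) (x' : X'.el b),
        α.rel a b x x' ≤ β.rel a b (f.app a x) (f'.app b x') := by
  rw [QFun.le_iff_app_le]
  constructor
  · intro h a b x x'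
    calc α.rel a b x x' = (α.down.app b (X'.yd.app b x')).1 a x := (α.down_app_yd x x').symm
      _ ≤ ((pshf f).app b (α.down.app b (X'.yd.app b x'))).1 a (f.app a x) :=
          le_iSup₂_of_le a x (le_comp_of_idm_le_right _ (Y.refl a _))
      _ ≤ (β.down.app b ((cpsf f').app b (X'.yd.app b x'))).1 a (f.app a x) :=
          h b _ a (f.app a x)
      _ ≤ β.rel a b (f.app a x) (f'.app b x') :=
          β.down_app_le_of_idm_le _ ((X'.refl b x').trans (app_le_cpsf_app f' (X'.yd.app b x') x'))
  · intro h s τ a y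
    refine iSup₂_le fun c x => (β.le_down_app_iff _ y _).mpr fun b y' => ?_
    simp only [cpsf_app, Quantaloid.iSup_comp]
    refine iSup₂_le fun c' x' => ?_
    calc Q.comp (Q.comp (Y'.hom c' b (f'.app c' x') y') (τ.1 c' x'))
            (Q.comp ((α.down.app s τ).1 c x) (Y.hom a c y (f.app c x)))
        = Q.comp (Y'.hom c' b (f'.app c' x') y')
            (Q.comp (Q.comp (τ.1 c' x') ((α.down.app s τ).1 c x))
              (Y.hom a c y (f.app c x))) := by
          simp only [Q.comp_assoc]
      _ ≤ Q.comp (Y'.hom c' b (f'.app c' x') y')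
            (Q.comp (β.rel c c' (f.app c x) (f'.app c' x')) (Y.hom a c y (f.app c x))) :=
          comp_le_comp le_rfl (comp_le_comp ((α.app_comp_down_app_le τ x x').trans (h c c' x x'))
            le_rfl)
      _ ≤ β.rel a b y y' :=
          (comp_le_comp le_rfl (β.rel_comp_hom _ _ _)).trans (β.hom_comp_rel _ _ _)

end QDist

theorem QCat.y_le_iff_homDist_le_untranspose (X : QCat Q) (g : QFun X X.P) :
    X.y ≤ g ↔ X.homDist ≤ g.untranspose := by
  rw [QFun.le_iff_app_le]
  exact ⟨fun h a b x x' => h b x' a x, fun h b x' a x => h a b x x'⟩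

theorem supP_pshf_lamd_cpsf_le_iff (X : QCat Q) (p : QFun X.Pd X.P) :
    (supP X).comp ((pshf p).comp ((lamd X).comp (cpsf p))) ≤ p.comp (infPd X) ↔
      ∀ s (T : X.Pd.Pd.el s) a (x : X.el a) b (τ : X.Pd.el b),
        Q.comp (X.P.Pd.hom b s ((cpsf X.y).app b τ) ((cpsf p).app s T)) ((p.app b τ).1 a x)
          ≤ (p.app s ((infPd X).app s T)).1 a x := by
  simp only [QFun.le_iff_app_le, QFun.comp_app, supP_pshf_app, lamd_app, iSup₂_le_iff]

theorem app_comp_Pd_hom_cpsf_le {Y Z : QCat Q} (g : QFun Y Z) {s b t : Q.Obj}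
    (Θ : Z.Pd.el b) (T : Y.Pd.el s) (w : Y.el t) :
    Q.comp (T.1 t w) (Z.Pd.hom b s Θ ((cpsf g).app s T)) ≤ Θ.1 t (g.app t w) :=
  (comp_le_comp (app_le_cpsf_app g T w) le_rfl).trans (QCat.app_comp_Pd_hom_le _ _ _)

theorem QDist.supP_pshf_lamd_cpsf_down_le {X : QCat Q} (α : QDist X X)
    (htrans : α.comp α ≤ α) :
    (supP X).comp ((pshf α.down).comp ((lamd X).comp (cpsf α.down)))
      ≤ α.down.comp (infPd X) := by
  rw [supP_pshf_lamd_cpsf_le_iff]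
  intro s T a x b τ
  set H := X.P.Pd.hom b s ((cpsf X.y).app b τ) ((cpsf α.down).app s T)
  refine (α.le_down_app_iff _ x _).mpr fun c z => ?_
  simp only [infPd_app, Quantaloid.iSup_comp]
  refine iSup₂_le fun t τ' => ?_
  have hT : Q.comp (T.1 t τ') H ≤ ⨆ d, ⨆ y : X.el d,
      Q.comp ((α.down.app t τ').1 d y) (τ.1 d y) := by
    rw [← cpsf_y_app]
    exact app_comp_Pd_hom_cpsf_le α.down _ T τ'
  calc Q.comp (Q.comp (τ'.1 c z) (T.1 t τ')) (Q.comp H ((α.down.app b τ).1 a x))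
      = Q.comp (τ'.1 c z) (Q.comp (Q.comp (T.1 t τ') H) ((α.down.app b τ).1 a x)) := by
        simp only [Q.comp_assoc]
    _ ≤ Q.comp (τ'.1 c z) (Q.comp (⨆ d, ⨆ y : X.el d,
          Q.comp ((α.down.app t τ').1 d y) (τ.1 d y)) ((α.down.app b τ).1 a x)) :=
        comp_le_comp le_rfl (comp_le_comp hT le_rfl)
    _ ≤ (α.comp α).rel a c x z := by
        simp only [Quantaloid.iSup_comp, Quantaloid.comp_iSup]
        refine iSup₂_le fun d y => le_iSup₂_of_le d y ?_
        calc Q.comp (τ'.1 c z)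
              (Q.comp (Q.comp ((α.down.app t τ').1 d y) (τ.1 d y)) ((α.down.app b τ).1 a x))
            = Q.comp (Q.comp (τ'.1 c z) ((α.down.app t τ').1 d y))
                (Q.comp (τ.1 d y) ((α.down.app b τ).1 a x)) := by
              simp only [Q.comp_assoc]
          _ ≤ Q.comp (α.rel d c y z) (α.rel a d x y) :=
              comp_le_comp (α.app_comp_down_app_le _ _ _) (α.app_comp_down_app_le _ _ _)
    _ ≤ α.rel a c x z := htrans a c x z

section LaxAlgebra

variable {X : QCat Q} (p : QFun X.Pd X.P)

theorem le_down_untranspose_comp_yd : p ≤ (p.comp X.yd).untranspose.down := by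
  refine QFun.le_iff_app_le.mpr fun s τ a x =>
    ((p.comp X.yd).untranspose.le_down_app_iff _ x _).mpr fun b y => ?_
  have hτ : τ.1 b y ≤ X.P.hom s b (p.app s τ) (p.app b (X.yd.app b y)) :=
    (X.Pd_hom_yd τ y).ge.trans (p.mono s b τ _)
  exact (comp_le_comp hτ le_rfl).trans (QCat.P_hom_comp_app_le _ _ x)

theorem down_untranspose_comp_yd_app_le {s b : Q.Obj} (τ : X.Pd.el s) (y : X.el b) :
    ((p.comp X.yd).untranspose.down.app s τ).1 b y
      ≤ X.P.Pd.hom b s ((cpsf X.y).app b (X.yd.app b y))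
          ((cpsf p).app s ((cpsf X.yd).app s τ)) := by
  set u := ((p.comp X.yd).untranspose.down.app s τ).1 b y
  refine le_iInf fun t => le_iInf fun σ => le_rda.mp ?_
  have hσ : σ.1 b y ≤ ((cpsf X.y).app b (X.yd.app b y)).1 t σ := by
    rw [cpsf_y_app]
    exact le_iSup₂_of_le b y (le_comp_of_idm_le_right _ (X.refl b y))
  refine le_trans ?_ hσ
  simp only [cpsf_app, Quantaloid.comp_iSup, Quantaloid.iSup_comp]
  refine iSup₂_le fun t' τ' => iSup₂_le fun c w => ?_
  calc Q.comp (Q.comp (X.P.hom t' t (p.app t' τ') σ)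
          (Q.comp (X.Pd.hom c t' (X.yd.app c w) τ') (τ.1 c w))) u
      ≤ Q.comp (Q.comp (X.P.hom t' t (p.app t' τ') σ)
          (Q.comp (X.P.hom c t' (p.app c (X.yd.app c w)) (p.app t' τ')) (τ.1 c w))) u :=
        comp_le_comp (comp_le_comp le_rfl (comp_le_comp (p.mono c t' _ _) le_rfl)) le_rfl
    _ = Q.comp (Q.comp (X.P.hom t' t (p.app t' τ') σ)
          (X.P.hom c t' (p.app c (X.yd.app c w)) (p.app t' τ'))) (Q.comp (τ.1 c w) u) := by
        simp only [Q.comp_assoc]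
    _ ≤ Q.comp (X.P.hom c t (p.app c (X.yd.app c w)) σ) ((p.app c (X.yd.app c w)).1 b y) :=
        comp_le_comp (X.P.hom_comp_le _ _ _)
          ((p.comp X.yd).untranspose.app_comp_down_app_le τ y w)
    _ ≤ σ.1 b y := QCat.P_hom_comp_app_le _ _ y

variable {p}

theorem down_untranspose_comp_yd_app_comp_le
    (hg : (supP X).comp ((pshf p).comp ((lamd X).comp (cpsf p))) ≤ p.comp (infPd X))
    {s a b : Q.Obj} (τ : X.Pd.el s) (x : X.el a) (y : X.el b) :
    Q.comp (((p.comp X.yd).untranspose.down.app s τ).1 b y)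
      ((p.comp X.yd).untranspose.rel a b x y) ≤ (p.app s τ).1 a x := by
  have h := (supP_pshf_lamd_cpsf_le_iff X p).mp hg s ((cpsf X.yd).app s τ) a x b (X.yd.app b y)
  rw [infPd_cpsf_yd] at h
  exact (comp_le_comp (down_untranspose_comp_yd_app_le p τ y) le_rfl).trans h

theorem existsUnique_down_eq_of_lax_algebra (hf : X.y ≤ p.comp X.yd)
    (hg : (supP X).comp ((pshf p).comp ((lamd X).comp (cpsf p))) ≤ p.comp (infPd X)) :
    ∃! α : QDist X X, (X.homDist ≤ α ∧ α.comp α ≤ α) ∧ α.down = p := by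
  set α := (p.comp X.yd).untranspose
  have hrefl : X.homDist ≤ α := (X.y_le_iff_homDist_le_untranspose _).mp hf
  have htrans : α.comp α ≤ α := fun a c x z => iSup₂_le fun b y => by
    have h := down_untranspose_comp_yd_app_comp_le hg (X.yd.app c z) x y
    rw [QDist.down_app_yd] at h
    exact h
  have hdown : α.down = p := by
    refine QFun.eq_of_le_of_ge (QFun.le_iff_app_le.mpr fun s τ a x => ?_)
      (le_down_untranspose_comp_yd p)
    exact (le_comp_of_idm_le_right _ ((X.refl a x).trans (hrefl a a x x))).trans
      (down_untranspose_comp_yd_app_comp_le hg τ x x)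
  exact ⟨α, ⟨⟨hrefl, htrans⟩, hdown⟩,
    fun β hβ => QDist.down_injective (hβ.2.trans hdown.symm)⟩

end LaxAlgebra

/-- for the strict distributive law `λ†` of `𝔓†` over `𝔓`,
`(λ†,Q)-Alg ≅ Mon(Q-Dist)`: lax `λ†`-algebra structures `p : P†X → PX` on `X`
(laws (f), (g) for `T = P†`, `e = y†`, `m = s†`) correspond bijectively to monads
`α : X ⇸ X` in `Q`-Dist (via `p = α↓`, `α↓ τ = τ ↘ α`), and lax `λ†`-homomorphisms
are exactly the morphisms of `Mon(Q-Dist)`. -/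
theorem statement9 (Q : Quantaloid.{u}) :
    -- every monad α in Q-Dist yields a lax λ†-algebra structure α↓
    (∀ (X : QCat Q) (α : QDist X X), X.homDist ≤ α → α.comp α ≤ α →
      (X.y ≤ (α.down).comp X.yd ∧
        (supP X).comp ((pshf α.down).comp ((lamd X).comp (cpsf α.down)))
          ≤ (α.down).comp (infPd X))) ∧
    -- every lax λ†-algebra structure arises from a unique monad in Q-Dist
    (∀ (X : QCat Q) (p : QFun X.Pd X.P),
      (X.y ≤ p.comp X.yd ∧
        (supP X).comp ((pshf p).comp ((lamd X).comp (cpsf p))) ≤ p.comp (infPd X)) →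
      ∃! α : QDist X X, (X.homDist ≤ α ∧ α.comp α ≤ α) ∧ α.down = p) ∧
    -- lax λ†-homomorphisms = morphisms of Mon(Q-Dist)
    (∀ (X Y : QCat Q) (α : QDist X X) (β : QDist Y Y) (f : QFun X Y),
      (X.homDist ≤ α ∧ α.comp α ≤ α) → (Y.homDist ≤ β ∧ β.comp β ≤ β) →
      ((pshf f).comp α.down ≤ (β.down).comp (cpsf f) ↔
        ∀ p q (x : X.el p) (x' : X.el q),
          α.rel p q x x' ≤ β.rel p q (f.app p x) (f.app q x'))) := by
  refine ⟨fun X α hrefl htrans => ⟨?_, α.supP_pshf_lamd_cpsf_down_le htrans⟩,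
    fun X p hp => existsUnique_down_eq_of_lax_algebra hp.1 hp.2,
    fun X Y α β f _ _ => QDist.pshf_comp_down_le_iff f f α β⟩
  rw [X.y_le_iff_homDist_le_untranspose, α.untranspose_down_comp_yd]
  exact hrefl

end QT
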